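/- In any tqBa5, the kernel K_I with operations α ∪ β := I(α ∨ β), α ∩ β := I(α ∧ β), ∼α := I¬α, 1 := ⊤, 0 := ⊥ forms a De Morgan algebra. -/

import Mathlib

/-! By T2, `K_I` is the set of fixed points of `I`. Since `I` is monotone (T1) and deflationary
(T3), this set is closed under `⊔` and `⊓`, and by T5 also under `neg`. Hence `I` acts as the
identity on every term built in `K_I`, and each De Morgan law for `K_I` is that of `L`. -/

open Function

section FixedPoints

variable {L : Type*} {I : L → L}

theorem monotone_of_map_inf [SemilatticeInf L] (hI : ∀ a b, I (a ⊓ b) = I a ⊓ I b) :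
    Monotone I :=
  fun a b h => inf_eq_left.mp (by rw [← hI, inf_eq_left.mpr h])

theorem Function.IsFixedPt.inf_of_map_inf [SemilatticeInf L]
    (hI : ∀ a b, I (a ⊓ b) = I a ⊓ I b) {x y : L} (hx : IsFixedPt I x) (hy : IsFixedPt I y) :
    IsFixedPt I (x ⊓ y) := by
  rw [IsFixedPt, hI, hx.eq, hy.eq]

theorem Function.IsFixedPt.sup_of_monotone [Lattice L] (hmono : Monotone I)
    (hle : ∀ a, I a ≤ a) {x y : L} (hx : IsFixedPt I x) (hy : IsFixedPt I y) :
    IsFixedPt I (x ⊔ y) :=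
  (hle _).antisymm <|
    sup_le (hx.eq.symm.le.trans (hmono le_sup_left)) (hy.eq.symm.le.trans (hmono le_sup_right))

theorem Function.IsFixedPt.neg_of_involutive {neg : L → L} (hneg : Involutive neg)
    (hI : ∀ a, neg (I (neg (I a))) = I a) {x : L} (hx : IsFixedPt I x) :
    IsFixedPt I (neg x) := by
  rw [← hx.eq]
  exact hneg.injective ((hI x).trans (hneg (I x)).symm)

end FixedPoints

theorem stmt13_general {L : Type*} [DistribLattice L] [BoundedOrder L] (neg I : L → L)
    (neg_neg : ∀ a : L, neg (neg a) = a)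
    (neg_sup : ∀ a b : L, neg (a ⊔ b) = neg a ⊓ neg b)
    (neg_inf : ∀ a b : L, neg (a ⊓ b) = neg a ⊔ neg b)
    (T1 : ∀ a b : L, I (a ⊓ b) = I a ⊓ I b)
    (T2 : ∀ a : L, I (I a) = I a)
    (T3 : ∀ a : L, I a ≤ a)
    (T5 : ∀ a : L, neg (I (neg (I a))) = I a) :
    ∀ α β γ : L, (∃ a : L, α = I a) → (∃ b : L, β = I b) → (∃ c : L, γ = I c) →
      I (α ⊔ β) = I (β ⊔ α) ∧
      I (α ⊓ β) = I (β ⊓ α) ∧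
      I (I (α ⊔ β) ⊔ γ) = I (α ⊔ I (β ⊔ γ)) ∧
      I (I (α ⊓ β) ⊓ γ) = I (α ⊓ I (β ⊓ γ)) ∧
      I (α ⊔ I (α ⊓ β)) = α ∧
      I (α ⊓ I (α ⊔ β)) = α ∧
      I (α ⊓ I (β ⊔ γ)) = I (I (α ⊓ β) ⊔ I (α ⊓ γ)) ∧
      I (α ⊓ (⊤ : L)) = α ∧
      I (α ⊔ (⊥ : L)) = α ∧
      I (neg (I (neg α))) = α ∧
      I (neg (I (α ⊔ β))) = I (I (neg α) ⊓ I (neg β)) ∧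
      I (neg (I (α ⊓ β))) = I (I (neg α) ⊔ I (neg β)) := by
  have hsup {x y : L} (hx : IsFixedPt I x) (hy : IsFixedPt I y) : I (x ⊔ y) = x ⊔ y :=
    (hx.sup_of_monotone (monotone_of_map_inf T1) T3 hy).eq
  have hinf {x y : L} (hx : IsFixedPt I x) (hy : IsFixedPt I y) : I (x ⊓ y) = x ⊓ y :=
    (hx.inf_of_map_inf T1 hy).eq
  rintro α β γ ⟨a, rfl⟩ ⟨b, rfl⟩ ⟨c, rfl⟩
  have hα : IsFixedPt I (I a) := T2 a
  have hβ : IsFixedPt I (I b) := T2 b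
  have hγ : IsFixedPt I (I c) := T2 c
  have hnα := hα.neg_of_involutive neg_neg T5
  have hnβ := hβ.neg_of_involutive neg_neg T5
  refine ⟨by rw [sup_comm], by rw [inf_comm], ?_, ?_, ?_, ?_, ?_, ?_, ?_, ?_, ?_, ?_⟩
  · rw [hsup hα hβ, hsup hβ hγ, sup_assoc]
  · rw [hinf hα hβ, hinf hβ hγ, inf_assoc]
  · rw [hinf hα hβ, sup_inf_self, hα.eq]
  · rw [hsup hα hβ, inf_sup_self, hα.eq]
  · rw [hsup hβ hγ, hinf hα hβ, hinf hα hγ, inf_sup_left]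
  · rw [inf_top_eq, hα.eq]
  · rw [sup_bot_eq, hα.eq]
  · rw [hnα.eq, neg_neg, hα.eq]
  · rw [hsup hα hβ, neg_sup, hnα.eq, hnβ.eq]
  · rw [hinf hα hβ, neg_inf, hnα.eq, hnβ.eq]

theorem stmt13 {L : Type*} [DistribLattice L] [BoundedOrder L] (neg I : L → L)
    (neg_neg : ∀ a : L, neg (neg a) = a)
    (neg_sup : ∀ a b : L, neg (a ⊔ b) = neg a ⊓ neg b)
    (neg_inf : ∀ a b : L, neg (a ⊓ b) = neg a ⊔ neg b)
    (T1 : ∀ a b : L, I (a ⊓ b) = I a ⊓ I b)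
    (T2 : ∀ a : L, I (I a) = I a)
    (T3 : ∀ a : L, I a ≤ a)
    (T4 : I (⊤ : L) = ⊤)
    (T5 : ∀ a : L, neg (I (neg (I a))) = I a) :
    ∀ α β γ : L, (∃ a : L, α = I a) → (∃ b : L, β = I b) → (∃ c : L, γ = I c) →
      I (α ⊔ β) = I (β ⊔ α) ∧
      I (α ⊓ β) = I (β ⊓ α) ∧
      I (I (α ⊔ β) ⊔ γ) = I (α ⊔ I (β ⊔ γ)) ∧
      I (I (α ⊓ β) ⊓ γ) = I (α ⊓ I (β ⊓ γ)) ∧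
      I (α ⊔ I (α ⊓ β)) = α ∧
      I (α ⊓ I (α ⊔ β)) = α ∧
      I (α ⊓ I (β ⊔ γ)) = I (I (α ⊓ β) ⊔ I (α ⊓ γ)) ∧
      I (α ⊓ (⊤ : L)) = α ∧
      I (α ⊔ (⊥ : L)) = α ∧
      I (neg (I (neg α))) = α ∧
      I (neg (I (α ⊔ β))) = I (I (neg α) ⊓ I (neg β)) ∧
      I (neg (I (α ⊓ β))) = I (I (neg α) ⊔ I (neg β)) :=
  stmt13_general neg I neg_neg neg_sup neg_inf T1 T2 T3 T5
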